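/- Let k be a field and A a k-algebra. For M a left A-module, the dual D(M) = Hom_k(M, k) with the weak* topology is a topological right A-module profinite over k, and the functor D : Mod(A) → TopMod_{pf/k}(A^op) is a contravariant equivalence of categories with quasi-inverse D^c = Hom_k^cont(−, k). -/
import Mathlib

open Topology

variable (k W : Type*) [Field k] [AddCommGroup W] [Module k W] [TopologicalSpace W]

/-- The set of open cofinite submodules of a topological module. -/
def Cofin : Set (Submodule k W) :=
  {W' | IsOpen (W' : Set W) ∧ Module.Finite k (W ⧸ W')}

/-- The canonical map from `W` to the product of its discrete finitely generated
quotients by open cofinite submodules. -/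
def canonMap : W → ∀ W' : Cofin k W, W ⧸ W'.1 :=
  fun w W' => Submodule.Quotient.mk w

/-- The inverse limit, realized as the set of compatible families inside the product. -/
def cofinLimit : Set (∀ W' : Cofin k W, W ⧸ W'.1) :=
  {f | ∀ (W₁ W₂ : Cofin k W) (h : W₁.1 ≤ W₂.1),
    Submodule.mapQ W₁.1 W₂.1 LinearMap.id (by simpa using h) (f W₁) = f W₂}

/-- A topological module is profinite if the canonical map to the inverse limit of its
discrete finitely generated quotients is an isomorphism of topological modules,
i.e. a homeomorphism onto the limit (with its subspace topology from the product). -/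
def IsProfinite : Prop :=
  Topology.IsInducing (canonMap k W) ∧ Function.Injective (canonMap k W) ∧
    Set.range (canonMap k W) = cofinLimit k W

/-- The weak* topology on the dual `Hom_k(M, k)` (`k` discrete). -/
def weakStarTopology (k M : Type*) [Field k] [TopologicalSpace k] [DiscreteTopology k]
    [AddCommGroup M] [Module k M] : TopologicalSpace (M →ₗ[k] k) :=
  TopologicalSpace.induced (fun (φ : M →ₗ[k] k) (m : M) => φ m) Pi.topologicalSpace

/-- Left multiplication by `a : A` on an `(A, k)`-module, as a `k`-linear map. -/
def actL (k A M : Type*) [Field k] [Ring A] [Algebra k A] [AddCommGroup M] [Module k M]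
    [Module A M] [SMulCommClass A k M] (a : A) : M →ₗ[k] M where
  toFun m := a • m
  map_add' := smul_add a
  map_smul' c m := smul_comm a c m

section Aux

variable {K : Type*} [Field K] [TopologicalSpace K] [DiscreteTopology K]
variable {V : Type*} [AddCommGroup V] [Module K V]

/-- The annihilator of a subset of `V` inside the dual space. -/
def annih (K : Type*) [Field K] {V : Type*} [AddCommGroup V] [Module K V] (S : Set V) :
    Submodule K (V →ₗ[K] K) where
  carrier := {φ | ∀ m ∈ S, φ m = 0}
  add_mem' h1 h2 m hm := by simp_all
  zero_mem' m hm := rfl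
  smul_mem' c φ h m hm := by simp_all

lemma mem_annih {S : Set V} {φ : V →ₗ[K] K} : φ ∈ annih K S ↔ ∀ m ∈ S, φ m = 0 := Iff.rfl

lemma isOpen_eqOn (φ₀ : V →ₗ[K] K) (S : Finset V) :
    IsOpen[weakStarTopology K V] {ψ : V →ₗ[K] K | ∀ m ∈ S, ψ m = φ₀ m} := by
  letI := weakStarTopology K V
  have hev : ∀ m : V, Continuous fun ψ : V →ₗ[K] K => ψ m := fun m =>
    (continuous_apply m).comp continuous_induced_dom
  have h : {ψ : V →ₗ[K] K | ∀ m ∈ S, ψ m = φ₀ m}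
      = ⋂ m ∈ S, (fun ψ : V →ₗ[K] K => ψ m) ⁻¹' {φ₀ m} := by ext; simp
  rw [h]
  exact isOpen_biInter_finset fun m _ => (hev m).isOpen_preimage _ (isOpen_discrete _)

lemma finite_quotient_annih (S : Finset V) :
    Module.Finite K ((V →ₗ[K] K) ⧸ annih K (S : Set V)) := by
  let e : ((V →ₗ[K] K) ⧸ annih K (S : Set V)) →ₗ[K] ({x : V // x ∈ S} → K) :=
    Submodule.liftQ (annih K (S : Set V))
      (LinearMap.pi fun m : {x : V // x ∈ S} => LinearMap.applyₗ (m : V))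
      (fun φ hφ => by
        simp only [LinearMap.mem_ker]
        ext m
        exact hφ m m.2)
  have hinj : Function.Injective e := by
    rw [← LinearMap.ker_eq_bot]
    apply Submodule.ker_liftQ_eq_bot
    intro φ hφ
    rw [LinearMap.mem_ker] at hφ
    intro m hm
    have h2 := congrFun
      (show (LinearMap.pi fun m : {x : V // x ∈ S} => LinearMap.applyₗ (m : V)) φ = 0 from hφ)
      ⟨m, hm⟩
    simpa using h2
  exact Module.Finite.of_injective e hinj

lemma annih_mem_cofin (S : Finset V) :
    annih K (S : Set V) ∈ @Cofin K (V →ₗ[K] K) _ _ _ (weakStarTopology K V) := by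
  constructor
  · have h := isOpen_eqOn (0 : V →ₗ[K] K) S
    have heq : {ψ : V →ₗ[K] K | ∀ m ∈ S, ψ m = (0 : V →ₗ[K] K) m}
        = (annih K (S : Set V) : Set (V →ₗ[K] K)) := by
      ext ψ; simp [mem_annih]
    rwa [heq] at h
  · exact finite_quotient_annih S

lemma exists_finset_basic {U : Set (V →ₗ[K] K)}
    (hU : IsOpen[weakStarTopology K V] U) {φ : V →ₗ[K] K} (hφ : φ ∈ U) :
    ∃ S : Finset V, {ψ : V →ₗ[K] K | ∀ m ∈ S, ψ m = φ m} ⊆ U := by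
  letI := weakStarTopology K V
  obtain ⟨T, hT, hTU⟩ := isOpen_induced_iff.mp hU
  have hφT : (fun m => φ m) ∈ T := by rw [← hTU] at hφ; exact hφ
  obtain ⟨I, u, h1, h2⟩ := isOpen_pi_iff.mp hT _ hφT
  refine ⟨I, fun ψ hψ => ?_⟩
  have : (fun m => ψ m) ∈ T := by
    apply h2
    intro m hm
    have hx : ψ m = φ m := hψ m hm
    show ψ m ∈ u m
    rw [hx]
    exact (h1 m hm).2
  rw [← hTU]
  exact this

lemma dual_sep {n n' : V} (h : ∀ φ : V →ₗ[K] K, φ n = φ n') : n = n' := by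
  rw [← sub_eq_zero, ← Module.forall_dual_apply_eq_zero_iff K (n - n')]
  intro φ
  simp [h φ, sub_eq_zero]

lemma exists_rep (S : Finset V) (ψ : (V →ₗ[K] K) →ₗ[K] K)
    (hψ : ∀ φ ∈ annih K (S : Set V), ψ φ = 0) : ∃ n : V, ∀ φ : V →ₗ[K] K, ψ φ = φ n := by
  classical
  set Wsp := Submodule.span K (S : Set V) with hW
  haveI : Module.Finite K Wsp := Module.Finite.span_of_finite K S.finite_toSet
  let r : (V →ₗ[K] K) →ₗ[K] Module.Dual K Wsp := Wsp.subtype.dualMap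
  have hr : Function.Surjective r :=
    LinearMap.dualMap_surjective_of_injective Wsp.injective_subtype
  obtain ⟨s, hs⟩ := r.exists_rightInverse_of_surjective (LinearMap.range_eq_top.mpr hr)
  obtain ⟨w, hw⟩ := (Module.evalEquiv K Wsp).surjective (ψ.comp s)
  refine ⟨(w : V), fun φ => ?_⟩
  have hker : s (r φ) - φ ∈ annih K (S : Set V) := by
    intro m hm
    have h1 : r (s (r φ)) = r φ := LinearMap.congr_fun hs (r φ)
    have h2 : r (s (r φ) - φ) = 0 := by rw [map_sub, h1, sub_self]
    have h3 := LinearMap.congr_fun h2 ⟨m, Submodule.subset_span hm⟩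
    simpa [r, LinearMap.dualMap_apply] using h3
  have h4 : ψ (s (r φ)) = ψ φ := by
    have := hψ _ hker
    rw [map_sub, sub_eq_zero] at this
    exact this
  have h5 : ψ (s (r φ)) = (Module.evalEquiv K Wsp w) (r φ) := by rw [hw]; rfl
  rw [← h4, h5]
  simp [Module.evalEquiv_apply, Module.Dual.eval_apply, r, LinearMap.dualMap_apply]

end Aux

/-- For a `k`-algebra `A` and `A`-modules `M`, `N`: the dual
`D(M) = Hom_k(M, k)` with the weak* topology is profinite over `k` and the right
`A`-action `φ ↦ φ ∘ (a • ·)` on it is continuous (so `D(M)` is a topological right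
`A`-module profinite over `k`); moreover `D` is fully faithful with quasi-inverse the
continuous dual: dualizing an `A`-linear map is continuous and right-`A`-linear, and
every continuous right-`A`-linear map `D(N) → D(M)` is the dual of a unique `A`-linear
map `M → N`. -/
theorem dual_functor_equivalence (k A M N : Type*) [Field k]
    [TopologicalSpace k] [DiscreteTopology k] [Ring A] [Algebra k A]
    [AddCommGroup M] [Module k M] [Module A M] [IsScalarTower k A M]
    [SMulCommClass A k M]
    [AddCommGroup N] [Module k N] [Module A N] [IsScalarTower k A N]
    [SMulCommClass A k N] :
    @IsProfinite k (M →ₗ[k] k) _ _ _ (weakStarTopology k M) ∧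
    (∀ a : A, @Continuous _ _ (weakStarTopology k M) (weakStarTopology k M)
      (fun φ : M →ₗ[k] k => φ.comp (actL k A M a))) ∧
    (∀ f : M →ₗ[A] N,
      @Continuous _ _ (weakStarTopology k N) (weakStarTopology k M)
        (fun φ : N →ₗ[k] k => φ.comp (f.restrictScalars k)) ∧
      (∀ (a : A) (φ : N →ₗ[k] k),
        (φ.comp (actL k A N a)).comp (f.restrictScalars k)
          = (φ.comp (f.restrictScalars k)).comp (actL k A M a))) ∧
    (∀ g : (N →ₗ[k] k) →ₗ[k] (M →ₗ[k] k),
      @Continuous _ _ (weakStarTopology k N) (weakStarTopology k M) g →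
      (∀ (a : A) (φ : N →ₗ[k] k),
        g (φ.comp (actL k A N a)) = (g φ).comp (actL k A M a)) →
      ∃! f : M →ₗ[A] N, ∀ φ : N →ₗ[k] k, g φ = φ.comp (f.restrictScalars k)) := by
  classical
  letI tM := weakStarTopology k M
  letI tN := weakStarTopology k N
  -- index of an annihilator in Cofin
  let idx : Finset M → (Cofin k (M →ₗ[k] k) : Set _) := fun S => ⟨annih k (S : Set M), annih_mem_cofin S⟩
  refine ⟨⟨⟨?_⟩, ?_, ?_⟩, ?_, ?_, ?_⟩
  · -- inducing
    have hcont : Continuous (canonMap k (M →ₗ[k] k)) :=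
      continuous_pi fun W' => continuous_quotient_mk'
    apply le_antisymm (continuous_iff_le_induced.mp hcont)
    -- second inequality via factoring evaluation through quotients
    let evQ : ∀ m : M, ((M →ₗ[k] k) ⧸ annih k (↑({m} : Finset M) : Set M)) →ₗ[k] k := fun m =>
      Submodule.liftQ _ (LinearMap.applyₗ m) (fun φ hφ => by
        simpa [LinearMap.mem_ker] using hφ m (by simp))
    have hevQ : ∀ m : M, Continuous (evQ m) := by
      intro m
      rw [isQuotientMap_quotient_mk'.continuous_iff]
      exact (continuous_apply m).comp continuous_induced_dom
    have hfact : (fun (φ : M →ₗ[k] k) (m : M) => φ m)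
        = (fun (gg : ∀ W' : Cofin k (M →ₗ[k] k), _ ⧸ W'.1) (m : M) => evQ m (gg (idx {m})))
          ∘ canonMap k (M →ₗ[k] k) := by
      funext φ m
      simp [canonMap, evQ, idx]
    have hh : Continuous (fun (gg : ∀ W' : Cofin k (M →ₗ[k] k), _ ⧸ W'.1) (m : M) =>
        evQ m (gg (idx {m}))) :=
      continuous_pi fun m => (hevQ m).comp (continuous_apply (idx {m}))
    calc TopologicalSpace.induced (canonMap k (M →ₗ[k] k)) Pi.topologicalSpace
        ≤ TopologicalSpace.induced (canonMap k (M →ₗ[k] k))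
            (TopologicalSpace.induced (fun gg (m : M) => evQ m (gg (idx {m})))
              Pi.topologicalSpace) :=
          induced_mono (continuous_iff_le_induced.mp hh)
      _ = TopologicalSpace.induced (fun (φ : M →ₗ[k] k) (m : M) => φ m) Pi.topologicalSpace := by
          rw [induced_compose, ← hfact]
      _ = tM := rfl
  · -- injective
    intro φ ψ h
    ext m
    have h2 := congrFun h (idx {m})
    have h3 := (Submodule.Quotient.eq _).mp h2
    have h4 := h3 m (by simp)
    simpa [sub_eq_zero] using h4
  · -- range = limit
    apply subset_antisymm
    · rintro _ ⟨w, rfl⟩ W₁ W₂ hle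
      show Submodule.mapQ _ _ LinearMap.id _ (Submodule.Quotient.mk w) = Submodule.Quotient.mk w
      rw [Submodule.mapQ_apply]
      rfl
    · intro f hf
      have hex : ∀ S : Finset M, ∃ ψ : M →ₗ[k] k, Submodule.Quotient.mk ψ = f (idx S) :=
        fun S => Submodule.Quotient.mk_surjective _ _
      choose ψS hψS using hex
      have agree : ∀ (S : Finset M) (m : M), m ∈ S → ψS S m = ψS {m} m := by
        intro S m hm
        have hle : annih k ((S : Finset M) : Set M) ≤ annih k (↑({m} : Finset M) : Set M) := by
          intro φ hφ x hx
          simp only [Finset.coe_singleton, Set.mem_singleton_iff] at hx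
          rw [hx]
          exact hφ m hm
        have hc := hf (idx S) (idx {m}) hle
        rw [← hψS S, Submodule.mapQ_apply] at hc
        rw [← hψS {m}] at hc
        have h3 := (Submodule.Quotient.eq _).mp hc
        have h4 := h3 m (by simp)
        simpa [sub_eq_zero] using h4
      have hadd : ∀ m m' : M, ψS {m + m'} (m + m') = ψS {m} m + ψS {m'} m' := by
        intro m m'
        have h1 := agree {m, m', m + m'} m (by simp)
        have h2 := agree {m, m', m + m'} m' (by simp)
        have h3 := agree {m, m', m + m'} (m + m') (by simp)
        rw [← h1, ← h2, ← h3, map_add]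
      have hsmul : ∀ (c : k) (m : M), ψS {c • m} (c • m) = c • ψS {m} m := by
        intro c m
        have h1 := agree {m, c • m} m (by simp)
        have h2 := agree {m, c • m} (c • m) (by simp)
        rw [← h1, ← h2, map_smul]
      let φL : M →ₗ[k] k :=
        { toFun := fun m => ψS {m} m
          map_add' := hadd
          map_smul' := fun c m => by simpa using hsmul c m }
      refine ⟨φL, ?_⟩
      funext W'
      obtain ⟨S, hS⟩ := exists_finset_basic W'.2.1
        (show (0 : M →ₗ[k] k) ∈ (W'.1 : Set (M →ₗ[k] k)) from W'.1.zero_mem)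
      have hle : annih k ((S : Finset M) : Set M) ≤ W'.1 := by
        intro φ hφ
        exact hS (fun m hm => by simpa using hφ m hm)
      have hc := hf (idx S) W' hle
      rw [← hψS S, Submodule.mapQ_apply] at hc
      show Submodule.Quotient.mk φL = f W'
      rw [← hc]
      have : φL - ψS S ∈ annih k ((S : Finset M) : Set M) := by
        intro m hm
        have := agree S m hm
        simp only [LinearMap.sub_apply]
        show ψS {m} m - ψS S m = 0
        rw [this, sub_self]
      exact (Submodule.Quotient.eq _).mpr (hle this)
  · -- continuity of the right action
    intro a
    apply continuous_induced_rng.mpr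
    apply continuous_pi
    intro m
    exact (continuous_apply (a • m)).comp continuous_induced_dom
  · -- dual of an A-linear map
    intro f
    constructor
    · apply continuous_induced_rng.mpr
      apply continuous_pi
      intro m
      exact (continuous_apply (f m)).comp continuous_induced_dom
    · intro a φ
      ext m
      exact congrArg φ ((map_smul f a m).symm)
  · -- essential surjectivity / full faithfulness
    intro g hg hA
    have key : ∀ m : M, ∃ n : N, ∀ φ : N →ₗ[k] k, g φ m = φ n := by
      intro m
      have hopenM : IsOpen {θ : M →ₗ[k] k | θ m = 0} := by
        have hc : Continuous fun θ : M →ₗ[k] k => θ m :=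
          (continuous_apply m).comp continuous_induced_dom
        show IsOpen ((fun θ : M →ₗ[k] k => θ m) ⁻¹' {0})
        exact hc.isOpen_preimage _ (isOpen_discrete _)
      have hU : IsOpen (g ⁻¹' {θ : M →ₗ[k] k | θ m = 0}) := hopenM.preimage hg
      obtain ⟨S, hS⟩ := exists_finset_basic hU
        (show (0 : N →ₗ[k] k) ∈ _ by simp)
      obtain ⟨n, hn⟩ := exists_rep S ((LinearMap.applyₗ m).comp g) (fun φ hφ => by
        have : g φ ∈ {θ : M →ₗ[k] k | θ m = 0} :=
          hS (fun x hx => by simpa using hφ x hx)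
        simpa using this)
      exact ⟨n, fun φ => by simpa using hn φ⟩
    choose n hn using key
    have nadd : ∀ m m' : M, n (m + m') = n m + n m' := by
      intro m m'
      refine dual_sep (K := k) fun φ => ?_
      rw [← hn (m + m') φ, map_add, map_add, hn m φ, hn m' φ]
    have nsmul : ∀ (a : A) (m : M), n (a • m) = a • n m := by
      intro a m
      refine dual_sep (K := k) fun φ => ?_
      have e3 := hA a φ
      calc φ (n (a • m)) = ((g φ).comp (actL k A M a)) m := (hn (a • m) φ).symm
        _ = (g (φ.comp (actL k A N a))) m := by rw [e3]
        _ = (φ.comp (actL k A N a)) (n m) := hn m _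
        _ = φ (a • n m) := rfl
    let fL : M →ₗ[A] N :=
      { toFun := n
        map_add' := nadd
        map_smul' := nsmul }
    refine ⟨fL, fun φ => ?_, fun f' hf' => ?_⟩
    · ext m
      exact hn m φ
    · ext m
      refine dual_sep (K := k) fun φ => ?_
      have h1 : φ (f' m) = g φ m := (LinearMap.congr_fun (hf' φ) m).symm
      rw [h1, hn m φ]
      rfl
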